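/- If Q is a spatial SGF-quantale, then the frame Q_e is a spatial frame, i.e., every h ∈ Q_e is the meet of the primes above it. -/
import Mathlib


/-- A unital involutive quantale. The multiplicative unit `1` plays the role of `e`. -/
class UIQuantale (Q : Type*) extends CompleteLattice Q, Monoid Q, StarMul Q where
  mul_sSup : ∀ (a : Q) (s : Set Q), a * sSup s = ⨆ b ∈ s, a * b
  sSup_mul : ∀ (a : Q) (s : Set Q), sSup s * a = ⨆ b ∈ s, b * a
  star_sSup : ∀ (s : Set Q), star (sSup s) = ⨆ b ∈ s, star b

/-- A partial unit: both `f` and `star f` are functional. -/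
def IsPU {Q : Type*} [UIQuantale Q] (f : Q) : Prop :=
  star f * f ≤ 1 ∧ f * star f ≤ 1

/-- A prime element of `Q_e`. -/
def IsPrimeE {Q : Type*} [UIQuantale Q] (p : Q) : Prop :=
  p ≤ 1 ∧ p ≠ 1 ∧ ∀ h k : Q, h ≤ 1 → k ≤ 1 → h ⊓ k ≤ p → h ≤ p ∨ k ≤ p

/-- An SGF-quantale: a unital involutive quantale which is join-generated by its
partial units (SGF1), satisfies `f = f f* f` for partial units (SGF2), and the
separation axiom SGF3. -/
class SGFQuantale (Q : Type*) extends UIQuantale Q where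
  sgf1 : ∀ a : Q, a = sSup {f | IsPU f ∧ f ≤ a}
  sgf2 : ∀ f : Q, IsPU f → f * star f * f = f
  sgf3 : ∀ f g h : Q, IsPU f → IsPU g → h ≤ 1 → f ≤ h * ⊤ ⊔ g → f ≤ h * f ⊔ g

/-- The incidence relation: `f` and `g` are incident at `p` if some `h ≤ d(f) ⊓ d(g)`
with `h ≰ p` satisfies `h f ≤ p f ⊔ g`. -/
def Incident {Q : Type*} [SGFQuantale Q] (p f g : Q) : Prop :=
  ∃ h : Q, h ≤ (f * star f) ⊓ (g * star g) ∧ ¬ h ≤ p ∧ h * f ≤ p * f ⊔ g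

/-- `I_{[p,f]}`: the join of all partial units `g` with `d(g) ≤ p` or `g` not
incident to `f` at `p`. -/
def Ibig {Q : Type*} [SGFQuantale Q] (p f : Q) : Q :=
  sSup {g | IsPU g ∧ (g * star g ≤ p ∨ ¬ Incident p g f)}

/-- Spatiality: (SPQ1) `f ≰ I_{[p,f]}` for every `(p,f)` in the incidence domain;
(SPQ2) every `a` is the meet of all the `I_{[p,f]}` above it. -/
def IsSpatial (Q : Type*) [SGFQuantale Q] : Prop :=
  (∀ p f : Q, IsPrimeE p → IsPU f → ¬ f * star f ≤ p → ¬ f ≤ Ibig p f) ∧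
  (∀ a : Q, a = sInf {x | ∃ p f : Q, IsPrimeE p ∧ IsPU f ∧ ¬ f * star f ≤ p ∧
      x = Ibig p f ∧ a ≤ x})

section Aux

variable {Q : Type*} [SGFQuantale Q]

private lemma qmul_sup (a b c : Q) : a * (b ⊔ c) = a * b ⊔ a * c := by
  calc a * (b ⊔ c) = a * sSup {b, c} := by rw [sSup_pair]
    _ = ⨆ x ∈ ({b, c} : Set Q), a * x := UIQuantale.mul_sSup a {b, c}
    _ = a * b ⊔ a * c := by rw [iSup_insert, iSup_singleton]

private lemma qsup_mul (a b c : Q) : (a ⊔ b) * c = a * c ⊔ b * c := by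
  calc (a ⊔ b) * c = sSup {a, b} * c := by rw [sSup_pair]
    _ = ⨆ x ∈ ({a, b} : Set Q), x * c := UIQuantale.sSup_mul c {a, b}
    _ = a * c ⊔ b * c := by rw [iSup_insert, iSup_singleton]

private lemma qstar_sup (a b : Q) : star (a ⊔ b) = star a ⊔ star b := by
  calc star (a ⊔ b) = star (sSup {a, b}) := by rw [sSup_pair]
    _ = ⨆ x ∈ ({a, b} : Set Q), star x := UIQuantale.star_sSup {a, b}
    _ = star a ⊔ star b := by rw [iSup_insert, iSup_singleton]

private lemma qmul_le_left {a b : Q} (c : Q) (h : a ≤ b) : c * a ≤ c * b := by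
  have h1 : c * b = c * a ⊔ c * b := by rw [← qmul_sup, sup_eq_right.mpr h]
  exact le_sup_left.trans h1.ge

private lemma qmul_le_right {a b : Q} (c : Q) (h : a ≤ b) : a * c ≤ b * c := by
  have h1 : b * c = a * c ⊔ b * c := by rw [← qsup_mul, sup_eq_right.mpr h]
  exact le_sup_left.trans h1.ge

private lemma qstar_le {a b : Q} (h : a ≤ b) : star a ≤ star b := by
  have h1 : star b = star a ⊔ star b := by rw [← qstar_sup, sup_eq_right.mpr h]
  exact le_sup_left.trans h1.ge

private lemma unit_isPU {v : Q} (hv : v ≤ 1) : IsPU v := by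
  have hs : star v ≤ 1 := (qstar_le hv).trans (le_of_eq (star_one Q))
  constructor
  · calc star v * v ≤ 1 * v := qmul_le_right v hs
      _ = v := one_mul v
      _ ≤ 1 := hv
  · calc v * star v ≤ 1 * star v := qmul_le_right (star v) hv
      _ = star v := one_mul _
      _ ≤ 1 := hs

private lemma unit_le_star {v : Q} (hv : v ≤ 1) : v ≤ star v := by
  have h := SGFQuantale.sgf2 v (unit_isPU hv)
  calc v = v * star v * v := h.symm
    _ ≤ v * star v * 1 := qmul_le_left _ hv
    _ = v * star v := mul_one _
    _ ≤ 1 * star v := qmul_le_right _ hv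
    _ = star v := one_mul _

private lemma unit_star {v : Q} (hv : v ≤ 1) : star v = v := by
  have hs : star v ≤ 1 := (qstar_le hv).trans (le_of_eq (star_one Q))
  refine le_antisymm ?_ (unit_le_star hv)
  have h2 := unit_le_star hs
  rwa [star_star] at h2

private lemma unit_mul_self {v : Q} (hv : v ≤ 1) : v * v = v := by
  refine le_antisymm ?_ ?_
  · calc v * v ≤ v * 1 := qmul_le_left _ hv
      _ = v := mul_one _
  · have h := SGFQuantale.sgf2 v (unit_isPU hv)
    rw [unit_star hv] at h
    calc v = v * v * v := h.symm
      _ ≤ v * v * 1 := qmul_le_left _ hv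
      _ = v * v := mul_one _

private lemma unit_d {v : Q} (hv : v ≤ 1) : v * star v = v := by
  rw [unit_star hv]; exact unit_mul_self hv

private lemma unit_mul_unit {u v : Q} (hu : u ≤ 1) (hv : v ≤ 1) : u * v = u ⊓ v := by
  refine le_antisymm (le_inf ?_ ?_) ?_
  · calc u * v ≤ u * 1 := qmul_le_left _ hv
      _ = u := mul_one _
  · calc u * v ≤ 1 * v := qmul_le_right _ hu
      _ = v := one_mul _
  · have h := unit_mul_self (v := u ⊓ v) (le_trans inf_le_left hu)
    calc u ⊓ v = (u ⊓ v) * (u ⊓ v) := h.symm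
      _ ≤ u * (u ⊓ v) := qmul_le_right _ inf_le_left
      _ ≤ u * v := qmul_le_left _ inf_le_right

private lemma sgf1_le {a X : Q} (H : ∀ c : Q, IsPU c → c ≤ a → c ≤ X) : a ≤ X := by
  calc a = sSup {f : Q | IsPU f ∧ f ≤ a} := SGFQuantale.sgf1 a
    _ ≤ X := sSup_le fun c hc => H c hc.1 hc.2

private lemma le_Ibig_of_le_p {p h : Q} (f : Q) (hh1 : h ≤ 1) (hhp : h ≤ p) :
    h ≤ Ibig p f := by
  refine sgf1_le fun c hc hch => le_sSup ?_
  refine ⟨hc, Or.inl ?_⟩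
  calc c * star c = c := unit_d (hch.trans hh1)
    _ ≤ p := hch.trans hhp

/-- Key transfer lemma: if `v = d(u)` is a unit with `v ≤ p⊤ ⊔ u`, then anything
incident to `v` at `p` is incident to `u` at `p`. Uses SGF3 twice. -/
private lemma inc_transfer {p u v g : Q} (hp : p ≤ 1) (hg : IsPU g) (hu : IsPU u)
    (hv : v ≤ 1) (hd : u * star u = v) (hcov : v ≤ p * ⊤ ⊔ u) :
    Incident p g v → Incident p g u := by
  rintro ⟨k, hk1, hk2, hk3⟩
  have hkv : k ≤ v := (hk1.trans inf_le_right).trans (unit_d hv).le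
  have hk01 : k ≤ 1 := hkv.trans hv
  have hkk : k * k = k := unit_mul_self hk01
  have hstark : star k = k := unit_star hk01
  have hkg : IsPU (k * g) := by
    constructor
    · have e1 : star (k * g) * (k * g) = star g * (k * g) := by
        rw [star_mul, hstark, mul_assoc (star g) k (k * g), ← mul_assoc k k g, hkk]
      rw [e1]
      calc star g * (k * g) = star g * k * g := (mul_assoc _ _ _).symm
        _ ≤ star g * 1 * g := qmul_le_right _ (qmul_le_left _ hk01)
        _ = star g * g := by rw [mul_one]
        _ ≤ 1 := hg.1
    · have e1 : (k * g) * star (k * g) = k * (g * star g) * k := by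
        rw [star_mul, hstark, mul_assoc k g (star g * k), ← mul_assoc g (star g) k,
          ← mul_assoc k (g * star g) k]
      rw [e1]
      calc k * (g * star g) * k ≤ k * 1 * k := qmul_le_right _ (qmul_le_left _ hg.2)
        _ = k * k := by rw [mul_one]
        _ = k := hkk
        _ ≤ 1 := hk01
  have s1 : k * g ≤ p * ⊤ ⊔ v :=
    hk3.trans (sup_le_sup_right (qmul_le_left _ le_top) v)
  have s2 : k * g ≤ p * (k * g) ⊔ v := SGFQuantale.sgf3 _ _ _ hkg (unit_isPU hv) hp s1
  have s3 : k * g ≤ p * ⊤ ⊔ u := by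
    refine s2.trans (sup_le ?_ hcov)
    exact le_sup_left.trans' (qmul_le_left _ le_top)
  have s4 : k * g ≤ p * (k * g) ⊔ u := SGFQuantale.sgf3 _ _ _ hkg hu hp s3
  have s5 : k * g ≤ p * g ⊔ u := by
    refine s4.trans (sup_le_sup_right ?_ u)
    calc p * (k * g) = p * k * g := (mul_assoc _ _ _).symm
      _ ≤ p * 1 * g := qmul_le_right _ (qmul_le_left _ hk01)
      _ = p * g := by rw [mul_one]
  refine ⟨k, ?_, hk2, s5⟩
  rw [hd]
  exact le_inf (hk1.trans inf_le_left) hkv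

/-- The self-contained contradiction: a unit `v = d(u)` with `v ≰ p`,
`v ≤ p⊤ ⊔ u` and `v ≤ I_{[p,u]}` contradicts SPQ1 for the pair `(p, v)`. -/
private lemma crux' (hsp : IsSpatial Q) {p u v : Q} (hp : IsPrimeE p) (hu : IsPU u)
    (hv : v ≤ 1) (hd : u * star u = v) (hvp : ¬ v ≤ p) (hcov : v ≤ p * ⊤ ⊔ u)
    (hvI : v ≤ Ibig p u) : False := by
  have hsub : {g : Q | IsPU g ∧ (g * star g ≤ p ∨ ¬ Incident p g u)} ⊆
      {g : Q | IsPU g ∧ (g * star g ≤ p ∨ ¬ Incident p g v)} := by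
    rintro g ⟨hg1, hg2⟩
    exact ⟨hg1, hg2.imp id fun hni hinc =>
      hni (inc_transfer hp.1 hg1 hu hv hd hcov hinc)⟩
  have hIuv : Ibig p u ≤ Ibig p v := sSup_le_sSup hsub
  have hvIv : v ≤ Ibig p v := hvI.trans hIuv
  have hnd : ¬ v * star v ≤ p := by rw [unit_d hv]; exact hvp
  exact hsp.1 p v hp (unit_isPU hv) hnd hvIv

/-- General contradiction: a unit `v ≤ d(f)`, `v ≰ p`, `v ≤ I_{[p,f]}`, together with
a unit `j ≤ d(f)`, `j ≰ p`, `j ≤ p ⊔ f`, is impossible. -/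
private lemma crux (hsp : IsSpatial Q) {p f v j : Q} (hp : IsPrimeE p) (hf : IsPU f)
    (hv1 : v ≤ 1) (hvdf : v ≤ f * star f) (hvp : ¬ v ≤ p) (hvI : v ≤ Ibig p f)
    (hj1 : j ≤ 1) (_hjdf : j ≤ f * star f) (hjp : ¬ j ≤ p) (hjcov : j ≤ p ⊔ f) :
    False := by
  set v' := v ⊓ j with hv'def
  have hv'1 : v' ≤ 1 := inf_le_left.trans hv1
  have hv'p : ¬ v' ≤ p := fun hle => ((hp.2.2 v j hv1 hj1 hle).elim hvp hjp)
  have hv'df : v' ≤ f * star f := inf_le_left.trans hvdf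
  set u := v' * f with hudef
  have hdu : u * star u = v' := by
    have e1 : u * star u = v' * (f * star f) * v' := by
      rw [hudef, star_mul, unit_star hv'1, mul_assoc v' f (star f * v'),
        ← mul_assoc f (star f) v', ← mul_assoc v' (f * star f) v']
    rw [e1, unit_mul_unit hv'1 hf.2, inf_eq_left.mpr hv'df, unit_mul_self hv'1]
  have hu : IsPU u := by
    constructor
    · have e1 : star u * u = star f * v' * f := by
        rw [hudef, star_mul, unit_star hv'1, mul_assoc (star f) v' (v' * f),
          ← mul_assoc v' v' f, unit_mul_self hv'1, mul_assoc (star f) v' f]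
      rw [e1]
      calc star f * v' * f ≤ star f * 1 * f := qmul_le_right _ (qmul_le_left _ hv'1)
        _ = star f * f := by rw [mul_one]
        _ ≤ 1 := hf.1
    · rw [hdu]; exact hv'1
  have hcov : v' ≤ p * ⊤ ⊔ u := by
    have h1 : v' ≤ p ⊔ f := inf_le_right.trans hjcov
    calc v' = v' * v' := (unit_mul_self hv'1).symm
      _ ≤ v' * (p ⊔ f) := qmul_le_left _ h1
      _ = v' * p ⊔ v' * f := qmul_sup _ _ _
      _ ≤ p * ⊤ ⊔ u := by
          refine sup_le (le_sup_left.trans' ?_) le_sup_right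
          calc v' * p ≤ 1 * p := qmul_le_right _ hv'1
            _ = p := one_mul _
            _ = p * 1 := (mul_one _).symm
            _ ≤ p * ⊤ := qmul_le_left _ le_top
  have huf : u ≤ f := by
    calc u = v' * f := rfl
      _ ≤ 1 * f := qmul_le_right _ hv'1
      _ = f := one_mul _
  have hsub2 : {g : Q | IsPU g ∧ (g * star g ≤ p ∨ ¬ Incident p g f)} ⊆
      {g : Q | IsPU g ∧ (g * star g ≤ p ∨ ¬ Incident p g u)} := by
    rintro g ⟨hg1, hg2⟩
    refine ⟨hg1, hg2.imp id fun hni hinc => hni ?_⟩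
    obtain ⟨k, hk1, hk2, hk3⟩ := hinc
    refine ⟨k, ?_, hk2, hk3.trans (sup_le_sup_left huf _)⟩
    have hkv' : k ≤ v' := (hk1.trans inf_le_right).trans (hdu).le
    exact le_inf (hk1.trans inf_le_left) (hkv'.trans hv'df)
  have hIfu : Ibig p f ≤ Ibig p u := sSup_le_sSup hsub2
  have hv'I : v' ≤ Ibig p u := (inf_le_left.trans hvI).trans hIfu
  exact crux' hsp hp hu hv'1 hdu hv'p hcov hv'I

/-- The dichotomy: if some unit `h ≤ I_{[p,f]}` with `h ≰ p`, then `1 ≤ I_{[p,f]}`. -/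
private lemma one_le_Ibig (hsp : IsSpatial Q) {p f h : Q} (hp : IsPrimeE p)
    (hf : IsPU f) (hdf : ¬ f * star f ≤ p) (hh1 : h ≤ 1) (hhI : h ≤ Ibig p f)
    (hhp : ¬ h ≤ p) : (1 : Q) ≤ Ibig p f := by
  refine sgf1_le fun c hc hc1 => ?_
  by_cases hinc : Incident p c f
  · exfalso
    obtain ⟨k, hk1, hk2, hk3⟩ := hinc
    have hkc : k ≤ c := (hk1.trans inf_le_left).trans (unit_d hc1).le
    have hk01 : k ≤ 1 := hkc.trans hc1
    have hkdf : k ≤ f * star f := hk1.trans inf_le_right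
    have hkcov : k ≤ p ⊔ f := by
      have e1 : k * c = k := by
        rw [unit_mul_unit hk01 hc1, inf_eq_left.mpr hkc]
      calc k = k * c := e1.symm
        _ ≤ p * c ⊔ f := hk3
        _ ≤ p ⊔ f := by
            refine sup_le_sup_right ?_ f
            calc p * c ≤ p * 1 := qmul_le_left _ hc1
              _ = p := mul_one _
    have hvp : ¬ h ⊓ (f * star f) ≤ p :=
      fun hle => ((hp.2.2 h (f * star f) hh1 hf.2 hle).elim hhp hdf)
    exact crux hsp hp hf (inf_le_left.trans hh1) inf_le_right hvp
      (inf_le_left.trans hhI) hk01 hkdf hk2 hkcov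
  · exact le_sSup ⟨hc, Or.inr hinc⟩

end Aux

/-- If `Q` is a spatial SGF-quantale, then `Q_e` is a spatial frame: every `h ≤ e`
is the meet (computed in `Q_e`) of the primes above it. -/

theorem stmt18 (Q : Type*) [SGFQuantale Q] (hsp : IsSpatial Q) :
    ∀ h : Q, h ≤ 1 → h = 1 ⊓ sInf {p : Q | IsPrimeE p ∧ h ≤ p} := by
  intro h hh
  refine le_antisymm (le_inf hh (le_sInf fun p hp => hp.2)) ?_
  refine le_trans (le_sInf ?_) (le_of_eq (hsp.2 h).symm)
  rintro I ⟨p, f, hp, hf, hdfp, rfl, hhI⟩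
  by_cases hhp : h ≤ p
  · have hpmem : p ∈ {q : Q | IsPrimeE q ∧ h ≤ q} := ⟨hp, hhp⟩
    exact (inf_le_right.trans (sInf_le hpmem)).trans (le_Ibig_of_le_p f hp.1 le_rfl)
  · exact inf_le_left.trans (one_le_Ibig hsp hp hf hdfp hh hhI hhp)
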